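/- Let G be a cubic graph, F a 2-factor of G, M a matching in F, and 𝒫 an F-matching of H = G − M. Then every loop of the F-complement of 𝒫 has even length; in fact, along each loop the edges alternate between edges of F and edges of G not in F. -/

import Mathlib

open SimpleGraph

variable {V : Type*}

/-- A cubic graph: every vertex has exactly `3` neighbours. -/
def IsCubic (G : SimpleGraph V) : Prop :=
  ∀ v : V, (G.neighborSet v).ncard = 3

/-- Two edges (as elements of `Sym2 V`) are adjacent if they are distinct and
share an endpoint. -/
def EdgesAdj (e₁ e₂ : Sym2 V) : Prop :=
  e₁ ≠ e₂ ∧ ∃ v : V, v ∈ e₁ ∧ v ∈ e₂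

/-- `G` has a proper `3`-edge-coloring. -/
def HasProper3EdgeColoring (G : SimpleGraph V) : Prop :=
  ∃ c : Sym2 V → Fin 3,
    ∀ e₁ ∈ G.edgeSet, ∀ e₂ ∈ G.edgeSet, EdgesAdj e₁ e₂ → c e₁ ≠ c e₂

/-- A bridgeless graph: no edge is a bridge. -/
def IsBridgeless (G : SimpleGraph V) : Prop :=
  ∀ e ∈ G.edgeSet, ¬ G.IsBridge e

/-- A snark: a connected bridgeless cubic graph admitting no proper
`3`-edge-coloring. -/
def IsSnark (G : SimpleGraph V) : Prop :=
  G.Connected ∧ IsBridgeless G ∧ IsCubic G ∧ ¬ HasProper3EdgeColoring G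

/-- A proper abelian coloring of `G` by the abelian group `A`: every edge gets a
nonzero color, adjacent edges get distinct colors, and at every vertex the
colors of the incident edges sum to zero. -/
def IsProperAbelianColoring {A : Type*} [AddCommGroup A]
    (G : SimpleGraph V) (σ : Sym2 V → A) : Prop :=
  (∀ e ∈ G.edgeSet, σ e ≠ 0) ∧
  (∀ e₁ ∈ G.edgeSet, ∀ e₂ ∈ G.edgeSet, EdgesAdj e₁ e₂ → σ e₁ ≠ σ e₂) ∧
  (∀ v : V, ∑ᶠ e ∈ G.incidenceSet v, σ e = 0)

/-- `F` is a `2`-factor of `G`: a spanning `2`-regular subgraph. -/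
def IsTwoFactor (G F : SimpleGraph V) : Prop :=
  F ≤ G ∧ ∀ v : V, (F.neighborSet v).ncard = 2

/-- `M` is a matching contained in the edge set of `F`. -/
def IsMatchingIn (M : Set (Sym2 V)) (F : SimpleGraph V) : Prop :=
  M ⊆ F.edgeSet ∧ ∀ e₁ ∈ M, ∀ e₂ ∈ M, e₁ ≠ e₂ → ¬ ∃ v : V, v ∈ e₁ ∧ v ∈ e₂

/-- A perfect matching in `F`: a matching covering every vertex. -/
def IsPerfectMatchingIn (M : Set (Sym2 V)) (F : SimpleGraph V) : Prop :=
  IsMatchingIn M F ∧ ∀ v : V, ∃ e ∈ M, v ∈ e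

/-- A maximum matching in `F`: a matching of maximum cardinality. -/
def IsMaximumMatchingIn (M : Set (Sym2 V)) (F : SimpleGraph V) : Prop :=
  IsMatchingIn M F ∧ ∀ M' : Set (Sym2 V), IsMatchingIn M' F → M'.ncard ≤ M.ncard

/-- A `3`-vertex of `H`: a vertex of degree `3`. -/
def IsThreeVertex (H : SimpleGraph V) (v : V) : Prop := (H.neighborSet v).ncard = 3

/-- A `2`-vertex of `H`: a vertex of degree `2`. -/
def IsTwoVertex (H : SimpleGraph V) (v : V) : Prop := (H.neighborSet v).ncard = 2

/-- An `F`-path in `H`: a (nontrivial) path in `H` whose two end-vertices are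
`3`-vertices of `H`, whose interior vertices are all `2`-vertices of `H`, and
whose two end-edges belong to `F`. -/
structure FPathIn (H F : SimpleGraph V) where
  a : V
  b : V
  walk : H.Walk a b
  isPath : walk.IsPath
  len_pos : 0 < walk.length
  ends_three : IsThreeVertex H a ∧ IsThreeVertex H b
  interior_two : ∀ w ∈ walk.support, w ≠ a → w ≠ b → IsTwoVertex H w
  end_edges : ∀ e ∈ walk.edges, (a ∈ e ∨ b ∈ e) → e ∈ F.edgeSet

/-- The vertices of an `F`-path. -/
def FPathIn.supp {H F : SimpleGraph V} (P : FPathIn H F) : Set V :=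
  {v | v ∈ P.walk.support}

/-- The edges of an `F`-path. -/
def FPathIn.edgeSet {H F : SimpleGraph V} (P : FPathIn H F) : Set (Sym2 V) :=
  {e | e ∈ P.walk.edges}

/-- An `F`-matching of `H`: a collection of pairwise vertex-disjoint `F`-paths
such that every `3`-vertex of `H` lies on (exactly) one of them. -/
def IsFMatching (H F : SimpleGraph V) (Ps : Set (FPathIn H F)) : Prop :=
  (∀ P ∈ Ps, ∀ Q ∈ Ps, P ≠ Q → Disjoint P.supp Q.supp) ∧
  (∀ v : V, IsThreeVertex H v → ∃ P ∈ Ps, v ∈ P.supp)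

/-- The set of edges lying on the paths of an `F`-matching. -/
def FMatchingEdges {H F : SimpleGraph V} (Ps : Set (FPathIn H F)) : Set (Sym2 V) :=
  {e | ∃ P ∈ Ps, e ∈ P.walk.edges}

/-- The `F`-complement of an `F`-matching: the subgraph of `H` induced by the
edges of `H` not lying on the paths of `Ps`. -/
def FComplement {H F : SimpleGraph V} (Ps : Set (FPathIn H F)) : SimpleGraph V :=
  H.deleteEdges (FMatchingEdges Ps)

/-- The number of `3`-vertices of `H` lying on a connected component `c` of `K`. -/
noncomputable def threeCount (H : SimpleGraph V) {K : SimpleGraph V} (c : K.ConnectedComponent) : ℕ :=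
  {v ∈ c.supp | IsThreeVertex H v}.ncard

/-- The graph `K` (an `F`-complement, whose nontrivial components are the
loops) is `3`-even w.r.t. `H`: every component carries an even number of
`3`-vertices of `H`. -/
def IsThreeEvenComplement (H K : SimpleGraph V) : Prop :=
  ∀ c : K.ConnectedComponent, Even (threeCount H c)

/-- A component of `K` is a `3`-odd loop if it carries an odd number of
`3`-vertices of `H`. -/
def Is3OddLoop (H : SimpleGraph V) {K : SimpleGraph V} (c : K.ConnectedComponent) : Prop :=
  Odd (threeCount H c)

/-- The number of odd components (odd cycles, for a `2`-factor) of `F`. -/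
noncomputable def oddCompCount (F : SimpleGraph V) : ℕ :=
  {c : F.ConnectedComponent | Odd c.supp.ncard}.ncard

/-- The number of even components (even cycles, for a `2`-factor) of `F`. -/
noncomputable def evenCompCount (F : SimpleGraph V) : ℕ :=
  {c : F.ConnectedComponent | Even c.supp.ncard}.ncard

/-- The oddness of `G`: the minimum number of odd cycles in a `2`-factor of `G`. -/
noncomputable def oddness (G : SimpleGraph V) : ℕ :=
  sInf {n : ℕ | ∃ F : SimpleGraph V, IsTwoFactor G F ∧ oddCompCount F = n}

/-- `v` lies on an odd component (odd cycle) of `F`. -/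
def OnOddCycle (F : SimpleGraph V) (v : V) : Prop :=
  Odd ((F.connectedComponentMk v).supp.ncard)

/-- A simple `F`-matching: an `F`-matching such that on each of its paths the
only edges lying on odd cycles of `F` are the edges incident to the
end-vertices. -/
def IsSimpleFMatching (H F : SimpleGraph V) (Ps : Set (FPathIn H F)) : Prop :=
  IsFMatching H F Ps ∧
  ∀ P ∈ Ps, ∀ e ∈ P.walk.edges,
    (e ∈ F.edgeSet ∧ ∀ w ∈ e, OnOddCycle F w) → (P.a ∈ e ∨ P.b ∈ e)

/-- The set `C ⊆ V` carries a `Θ`-graph structure in `H`: two distinct vertices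
joined by three internally disjoint paths whose union is exactly the part of
`H` on `C`. -/
def IsThetaOn (H : SimpleGraph V) (C : Set V) : Prop :=
  ∃ a b : V, a ≠ b ∧ ∃ p q r : H.Walk a b,
    p.IsPath ∧ q.IsPath ∧ r.IsPath ∧ p ≠ q ∧ p ≠ r ∧ q ≠ r ∧
    (∀ w ∈ p.support, w ∈ q.support → w = a ∨ w = b) ∧
    (∀ w ∈ p.support, w ∈ r.support → w = a ∨ w = b) ∧
    (∀ w ∈ q.support, w ∈ r.support → w = a ∨ w = b) ∧
    C = {w | w ∈ p.support ∨ w ∈ q.support ∨ w ∈ r.support} ∧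
    (∀ e ∈ H.edgeSet, (∀ w ∈ e, w ∈ C) → e ∈ p.edges ∨ e ∈ q.edges ∨ e ∈ r.edges)

/-- The set `C ⊆ V` carries a kayak-paddle graph structure in `H`: two
vertex-disjoint cycles joined by a path, their union being exactly the part of
`H` on `C`. -/
def IsKayakPaddleOn (H : SimpleGraph V) (C : Set V) : Prop :=
  ∃ a b : V, ∃ (c₁ : H.Walk a a) (c₂ : H.Walk b b) (p : H.Walk a b),
    c₁.IsCycle ∧ c₂.IsCycle ∧ p.IsPath ∧
    (∀ w ∈ c₁.support, w ∉ c₂.support) ∧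
    (∀ w ∈ p.support, w ∈ c₁.support → w = a) ∧
    (∀ w ∈ p.support, w ∈ c₂.support → w = b) ∧
    C = {w | w ∈ c₁.support ∨ w ∈ c₂.support ∨ w ∈ p.support} ∧
    (∀ e ∈ H.edgeSet, (∀ w ∈ e, w ∈ C) → e ∈ c₁.edges ∨ e ∈ c₂.edges ∨ e ∈ p.edges)

/-- The set `C ⊆ V` carries an even cycle of `H` whose vertices and edges are
exactly the part of `H` on `C`. -/
def IsEvenCycleOn (H : SimpleGraph V) (C : Set V) : Prop :=
  ∃ a : V, ∃ W : H.Walk a a, W.IsCycle ∧ Even W.length ∧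
    C = {w | w ∈ W.support} ∧
    (∀ e ∈ H.edgeSet, (∀ w ∈ e, w ∈ C) → e ∈ W.edges)

/-- `Meven` is a perfect matching of the even part `F_even` of the `2`-factor
`F`: a matching of `F` using only edges on even cycles and covering all
vertices of even cycles. -/
def IsPerfectMatchingOfEvenPart (Meven : Set (Sym2 V)) (F : SimpleGraph V) : Prop :=
  IsMatchingIn Meven F ∧
  (∀ e ∈ Meven, ∀ w ∈ e, ¬ OnOddCycle F w) ∧
  (∀ v : V, ¬ OnOddCycle F v → ∃ e ∈ Meven, v ∈ e)

/-- Two odd components `c₁`, `c₂` of `F` are linked in `H_odd = G − M_even`: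
there is a path of `H_odd` from `c₁` to `c₂` all of whose interior vertices
avoid odd cycles of `F` (i.e. are `2`-vertices of `H_odd`). -/
def OddCompLinked (G F : SimpleGraph V) (Meven : Set (Sym2 V))
    (c₁ c₂ : F.ConnectedComponent) : Prop :=
  ∃ u v : V, u ∈ c₁.supp ∧ v ∈ c₂.supp ∧
    ∃ W : (G.deleteEdges Meven).Walk u v, W.IsPath ∧ 0 < W.length ∧
      ∀ w ∈ W.support, w ≠ u → w ≠ v → ¬ OnOddCycle F w

/-- The odd-cycle-incidence graph `K_odd`: vertices are the odd cycles of `F`,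
two of them being adjacent iff they are linked by a path of
`H_odd = G − M_even` with all interior vertices `2`-vertices of `H_odd`
(this is `H_odd` with the edges of `F_odd` contracted and the `2`-vertices
suppressed). -/
def Kodd (G F : SimpleGraph V) (Meven : Set (Sym2 V)) :
    SimpleGraph {c : F.ConnectedComponent // Odd c.supp.ncard} where
  Adj c₁ c₂ := c₁ ≠ c₂ ∧
    (OddCompLinked G F Meven c₁.1 c₂.1 ∨ OddCompLinked G F Meven c₂.1 c₁.1)
  symm := ⟨fun c₁ c₂ h => ⟨h.1.symm, h.2.symm⟩⟩
  loopless := ⟨fun c h => h.1 rfl⟩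

/-- The set of edges of `K` lying on the connected component `c` of `K`. -/
def compEdgeSet (K : SimpleGraph V) (c : K.ConnectedComponent) : Set (Sym2 V) :=
  {e ∈ K.edgeSet | ∃ w, w ∈ e ∧ w ∈ c.supp}

/-- The set `E_Ps` of end-edges of the paths of an `F`-matching `Ps`. -/
def endEdges {H F : SimpleGraph V} (Ps : Set (FPathIn H F)) : Set (Sym2 V) :=
  {e | ∃ P ∈ Ps, e ∈ P.walk.edges ∧ (P.a ∈ e ∨ P.b ∈ e)}

/-- The edge set attached to a vertex of the loop-cycle-incidence graph `B`:
a component of `F − E_Ps`, a loop of the `F`-complement `ℒ`, or a path of `Ps`. -/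
def bEdgeSet (F : SimpleGraph V) {H : SimpleGraph V} (Ps : Set (FPathIn H F)) :
    (F.deleteEdges (endEdges Ps)).ConnectedComponent ⊕
      ((FComplement Ps).ConnectedComponent ⊕ ↥Ps) → Set (Sym2 V)
  | Sum.inl C => compEdgeSet (F.deleteEdges (endEdges Ps)) C
  | Sum.inr (Sum.inl c) => compEdgeSet (FComplement Ps) c
  | Sum.inr (Sum.inr P) => FPathIn.edgeSet P.1

/-- The loop-cycle-incidence graph `B`: a bipartite graph on
`𝒞* ⊕ (ℒ ⊕ Ps)`, where `𝒞*` is the set of components of `F − E_Ps`, `ℒ` the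
set of components (loops) of the `F`-complement and `Ps` the paths of the
`F`-matching; a component of `F − E_Ps` is adjacent to a loop/path iff they
share an edge of `G`. -/
def LoopCycleIncidence (F : SimpleGraph V) {H : SimpleGraph V}
    (Ps : Set (FPathIn H F)) :
    SimpleGraph ((F.deleteEdges (endEdges Ps)).ConnectedComponent ⊕
      ((FComplement Ps).ConnectedComponent ⊕ ↥Ps)) where
  Adj a b := ((a.isLeft ∧ b.isRight) ∨ (a.isRight ∧ b.isLeft)) ∧
    ∃ e, e ∈ bEdgeSet F Ps a ∧ e ∈ bEdgeSet F Ps b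
  symm := ⟨by
    rintro a b ⟨hs, e, h₁, h₂⟩
    exact ⟨by tauto, e, h₂, h₁⟩⟩
  loopless := ⟨by
    rintro a ⟨hs, -⟩
    rcases a with a | a <;> simp_all⟩

/-- Remove a set of vertices from a graph (keeping them as isolated vertices):
used to form `B − Ps`. -/
def removeVerts {W : Type*} (B : SimpleGraph W) (S : Set W) : SimpleGraph W where
  Adj a b := B.Adj a b ∧ a ∉ S ∧ b ∉ S
  symm := ⟨fun a b h => ⟨h.1.symm, h.2.2, h.2.1⟩⟩
  loopless := ⟨fun a h => B.loopless.irrefl a h.1⟩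

/-- The vertices of `B` corresponding to the paths of `Ps`. -/
def PVerts (F : SimpleGraph V) {H : SimpleGraph V} (Ps : Set (FPathIn H F)) :
    Set ((F.deleteEdges (endEdges Ps)).ConnectedComponent ⊕
      ((FComplement Ps).ConnectedComponent ⊕ ↥Ps)) :=
  {x | ∃ P : ↥Ps, x = Sum.inr (Sum.inr P)}

/-- A permutation snark: a snark having a `2`-factor consisting of precisely
two chordless cycles. -/
def IsPermutationSnark (G : SimpleGraph V) : Prop :=
  IsSnark G ∧ ∃ F : SimpleGraph V, IsTwoFactor G F ∧
    Nat.card F.ConnectedComponent = 2 ∧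
    ∀ u v : V, G.Adj u v → ¬ F.Adj u v →
      F.connectedComponentMk u ≠ F.connectedComponentMk v

/-- The graph obtained from `H` (all of whose vertices have degree `2` or `3`)
by suppressing the degree-`2` vertices is `3`-edge-colorable: there is a
`3`-coloring of the edges which is constant through `2`-vertices and proper at
`3`-vertices. -/
def SuppressedThreeEdgeColorable (H : SimpleGraph V) : Prop :=
  ∃ c : Sym2 V → Fin 3,
    (∀ v : V, IsThreeVertex H v →
      ∀ e₁ ∈ H.incidenceSet v, ∀ e₂ ∈ H.incidenceSet v, e₁ ≠ e₂ → c e₁ ≠ c e₂) ∧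
    (∀ v : V, IsTwoVertex H v →
      ∀ e₁ ∈ H.incidenceSet v, ∀ e₂ ∈ H.incidenceSet v, c e₁ = c e₂)

/-- `e_r(G)`: the minimum cardinality of a set of pairwise non-adjacent edges
of `G` whose removal, followed by suppression of the resulting `2`-vertices,
yields a `3`-edge-colorable (cubic) graph. -/
noncomputable def edgeReductionNumber (G : SimpleGraph V) : ℕ :=
  sInf {n : ℕ | ∃ R : Set (Sym2 V), IsMatchingIn R G ∧
    SuppressedThreeEdgeColorable (G.deleteEdges R) ∧ R.ncard = n}

/-! At a vertex `v`, the `F`-complement misses one of the two `F`-edges at `v`: the `M`-edge if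
`v` is covered by `M`; otherwise `v` is a `3`-vertex of `G − M`, hence an end of a path of the
`F`-matching, whose end-edge lies in `F`. Since `v` has only one non-`F`-edge in `G`, two edges of
the `F`-complement at `v` are one in `F` and one not: the `F`-complement is alternating with
respect to `F`. Along a cycle, consecutive edges, the last and the first included, therefore
alternate, which forces even length. -/

lemma Nat.iff_iff_even_of_forall_iff_not {P : ℕ → Prop} {n : ℕ}
    (h : ∀ i, i + 1 < n → (P i ↔ ¬P (i + 1))) : ∀ i < n, (P i ↔ (P 0 ↔ Even i))
  | 0, _ => by simp
  | i + 1, hi => by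
    have ih := Nat.iff_iff_even_of_forall_iff_not h i (by omega)
    have hstep := h i hi
    rw [Nat.even_add_one]
    tauto

namespace SimpleGraph

variable {G F K : SimpleGraph V} {u v w w' x : V}

lemma eq_of_adj_of_not_adj_of_le (hFG : F ≤ G) (hG : (G.neighborSet v).ncard = 3)
    (hF : (F.neighborSet v).ncard = 2) (hw : G.Adj v w) (hw' : G.Adj v w')
    (hFw : ¬F.Adj v w) (hFw' : ¬F.Adj v w') : w = w' := by
  have hfin : (G.neighborSet v).Finite := Set.finite_of_ncard_ne_zero (by omega)
  have hsub : F.neighborSet v ⊆ G.neighborSet v := fun y hy => hFG hy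
  have hdiff : (G.neighborSet v \ F.neighborSet v).ncard ≤ 1 := by
    rw [Set.ncard_sdiff hsub (hfin.subset hsub)]
    omega
  exact (Set.ncard_le_one hfin.sdiff).1 hdiff w ⟨hw, hFw⟩ w' ⟨hw', hFw'⟩

lemma eq_or_eq_of_adj_of_ncard_neighborSet_eq_two (hF : (F.neighborSet v).ncard = 2)
    (hne : w ≠ w') (hw : F.Adj v w) (hw' : F.Adj v w') (hx : F.Adj v x) : x = w ∨ x = w' := by
  have hpair : {w, w'} = F.neighborSet v :=
    Set.eq_of_subset_of_ncard_le (Set.pair_subset hw hw') (by rw [Set.ncard_pair hne, hF])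
      (Set.finite_of_ncard_ne_zero (by omega))
  have hx' : x ∈ ({w, w'} : Set V) := by
    rw [hpair]
    exact hx
  simpa using hx'

namespace Walk

lemma IsTrail.sym2_getVert_ne {p : G.Walk u v} (hp : p.IsTrail) {i j : ℕ} (hij : i < j)
    (hj : j < p.length) :
    s(p.getVert i, p.getVert (i + 1)) ≠ s(p.getVert j, p.getVert (j + 1)) := by
  rw [← getElem_edges (by simp; omega), ← getElem_edges (by simp; omega), Ne,
    hp.edges_nodup.getElem_inj_iff]
  omega

end Walk

namespace IsAlternating

lemma adj_getVert_iff_not_adj (halt : K.IsAlternating F) {p : K.Walk u v} (hp : p.IsTrail)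
    {i : ℕ} (hi : i + 1 < p.length) :
    F.Adj (p.getVert i) (p.getVert (i + 1)) ↔ ¬F.Adj (p.getVert (i + 1)) (p.getVert (i + 2)) := by
  have hne : p.getVert i ≠ p.getVert (i + 2) := fun h =>
    hp.sym2_getVert_ne (Nat.lt_succ_self i) hi (by rw [h, Sym2.eq_swap])
  rw [F.adj_comm]
  exact halt hne (p.adj_getVert_succ (by omega)).symm (p.adj_getVert_succ hi)

lemma getElem_edges_mem_iff_not_mem (halt : K.IsAlternating F) {p : K.Walk u v}
    (hp : p.IsTrail) (i : ℕ) (h : i + 1 < p.edges.length) :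
    p.edges[i] ∈ F.edgeSet ↔ p.edges[i + 1] ∉ F.edgeSet := by
  simp only [Walk.getElem_edges, mem_edgeSet]
  exact halt.adj_getVert_iff_not_adj hp (by simpa using h)

lemma even_length_of_isCircuit (halt : K.IsAlternating F) {p : K.Walk u u}
    (hp : p.IsCircuit) : Even p.length := by
  have hn : 3 ≤ p.length := hp.three_le_length
  obtain ⟨m, hm⟩ : ∃ m, p.length = m + 1 := ⟨p.length - 1, by omega⟩
  have hlast : p.getVert (m + 1) = u := hm ▸ p.getVert_length
  have hparity := Nat.iff_iff_even_of_forall_iff_not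
    (P := fun i => F.Adj (p.getVert i) (p.getVert (i + 1)))
    (fun i hi => halt.adj_getVert_iff_not_adj hp.isTrail hi) m (by omega)
  have hwrap : F.Adj u (p.getVert 1) ↔ ¬F.Adj u (p.getVert m) := by
    have hne : p.getVert 1 ≠ p.getVert m := fun h =>
      hp.isTrail.sym2_getVert_ne (i := 0) (j := m) (by omega) (by omega)
        (by rw [p.getVert_zero, h, hlast, Sym2.eq_swap])
    have hfirst : K.Adj u (p.getVert 1) := by simpa using p.adj_getVert_succ (i := 0) (by omega)
    have hlastAdj := p.adj_getVert_succ (i := m) (by omega)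
    rw [hlast] at hlastAdj
    exact halt hne hfirst hlastAdj.symm
  simp only [p.getVert_zero, zero_add, hlast] at hparity
  rw [F.adj_comm] at hparity
  rw [hm, Nat.even_add_one]
  tauto

end IsAlternating

end SimpleGraph

section FMatching

variable {H F : SimpleGraph V} {v : V}

lemma FPathIn.eq_a_or_eq_b_of_isThreeVertex (P : FPathIn H F) (hv : v ∈ P.walk.support)
    (h3 : IsThreeVertex H v) : v = P.a ∨ v = P.b := by
  by_contra! hab
  have h2 := P.interior_two v hv hab.1 hab.2
  rw [IsTwoVertex] at h2
  rw [IsThreeVertex] at h3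
  omega

lemma FPathIn.exists_adj_mem_edges (P : FPathIn H F) (hv : v = P.a ∨ v = P.b) :
    ∃ x, F.Adj v x ∧ s(v, x) ∈ P.walk.edges := by
  have hlen := P.len_pos
  obtain ⟨x, hx⟩ : ∃ x, s(v, x) ∈ P.walk.edges := by
    rcases hv with rfl | rfl
    · have hmem := List.getElem_mem (l := P.walk.edges) (n := 0) (by simpa using hlen)
      rw [Walk.getElem_edges, Walk.getVert_zero] at hmem
      exact ⟨_, hmem⟩
    · have hmem := List.getElem_mem (l := P.walk.edges) (n := P.walk.length - 1) (by simp; omega)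
      rw [Walk.getElem_edges, Nat.sub_add_cancel hlen, Walk.getVert_length, Sym2.eq_swap] at hmem
      exact ⟨_, hmem⟩
  have hend : P.a ∈ s(v, x) ∨ P.b ∈ s(v, x) := by
    rcases hv with rfl | rfl <;> simp
  exact ⟨x, P.end_edges _ hx hend, hx⟩

end FMatching

section FComplement

variable {G F : SimpleGraph V} {M : Set (Sym2 V)}

lemma exists_adj_not_adj_fComplement (hG : IsCubic G) (hM : M ⊆ F.edgeSet)
    {Ps : Set (FPathIn (G.deleteEdges M) F)}
    (hPs : ∀ v, IsThreeVertex (G.deleteEdges M) v → ∃ P ∈ Ps, v ∈ P.supp) (v : V) :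
    ∃ x, F.Adj v x ∧ ¬(FComplement Ps).Adj v x := by
  by_cases hcov : ∃ x, s(v, x) ∈ M
  · obtain ⟨x, hx⟩ := hcov
    exact ⟨x, hM hx, fun h => (deleteEdges_adj.1 (deleteEdges_adj.1 h).1).2 hx⟩
  · push Not at hcov
    have h3 : IsThreeVertex (G.deleteEdges M) v := by
      have hN : (G.deleteEdges M).neighborSet v = G.neighborSet v := by
        ext y
        simp [hcov y]
      rw [IsThreeVertex, hN, hG v]
    obtain ⟨P, hP, hvP⟩ := hPs v h3
    obtain ⟨x, hFx, hx⟩ := P.exists_adj_mem_edges (P.eq_a_or_eq_b_of_isThreeVertex hvP h3)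
    exact ⟨x, hFx, fun h => (deleteEdges_adj.1 h).2 ⟨P, hP, hx⟩⟩

lemma isAlternating_fComplement (hG : IsCubic G) (hF : IsTwoFactor G F) (hM : M ⊆ F.edgeSet)
    {Ps : Set (FPathIn (G.deleteEdges M) F)}
    (hPs : ∀ v, IsThreeVertex (G.deleteEdges M) v → ∃ P ∈ Ps, v ∈ P.supp) :
    (FComplement Ps).IsAlternating F := by
  intro v w w' hne hw hw'
  have hGadj : ∀ {y}, (FComplement Ps).Adj v y → G.Adj v y := fun h =>
    (deleteEdges_adj.1 (deleteEdges_adj.1 h).1).1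
  constructor
  · intro hFw hFw'
    obtain ⟨x, hFx, hx⟩ := exists_adj_not_adj_fComplement hG hM hPs v
    rcases eq_or_eq_of_adj_of_ncard_neighborSet_eq_two (hF.2 v) hne hFw hFw' hFx with rfl | rfl
    exacts [hx hw, hx hw']
  · intro hFw'
    by_contra hFw
    exact hne (eq_of_adj_of_not_adj_of_le hF.1 (hG v) (hF.2 v) (hGadj hw) (hGadj hw') hFw hFw')

end FComplement

theorem statement11 {V : Type*} (G F : SimpleGraph V) (M : Set (Sym2 V))
    (hG : IsCubic G) (hF : IsTwoFactor G F) (hM : IsMatchingIn M F)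
    (Ps : Set (FPathIn (G.deleteEdges M) F))
    (hPs : IsFMatching (G.deleteEdges M) F Ps)
    (u : V) (W : (FComplement Ps).Walk u u) (hW : W.IsCycle) :
    Even W.length ∧
      ∀ (i : ℕ) (h : i + 1 < W.edges.length),
        (W.edges[i]'(by omega) ∈ F.edgeSet ↔ W.edges[i + 1]'h ∉ F.edgeSet) := by
  have halt := isAlternating_fComplement hG hF hM.1 hPs.2
  exact ⟨halt.even_length_of_isCircuit hW.isCircuit,
    halt.getElem_edges_mem_iff_not_mem hW.isCircuit.isTrail⟩
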